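/- arXiv:1706.00643 — 4 statements merged into one kernel-verified Lean document; each statement's English description precedes it below -/
import Mathlib

section
/- Let A be an n×n matrix over the max-plus algebra with Tr(A) ≤ 𝟙, where Tr(A) = tr A ⊕ tr A² ⊕ ⋯ ⊕ tr Aⁿ. Then for every integer k ≥ 0, A^k ≤ A* entrywise, where A* = I ⊕ A ⊕ ⋯ ⊕ A^{n-1}. -/
open Finset

/-- The max-plus identity matrix: `0` on the diagonal, `-∞` elsewhere. -/
noncomputable def mpId (n : ℕ) : Fin n → Fin n → WithBot ℝ :=
  fun i j => if i = j then ((0 : ℝ) : WithBot ℝ) else ⊥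

/-- Max-plus matrix multiplication. -/
noncomputable def mpMul {n : ℕ} (A B : Fin n → Fin n → WithBot ℝ) :
    Fin n → Fin n → WithBot ℝ :=
  fun i j => univ.sup fun k => A i k + B k j

/-- Max-plus matrix power. -/
noncomputable def mpPow {n : ℕ} (A : Fin n → Fin n → WithBot ℝ) :
    ℕ → Fin n → Fin n → WithBot ℝ
  | 0 => mpId n
  | m + 1 => mpMul A (mpPow A m)

/-- Max-plus trace: the maximum diagonal entry. -/
noncomputable def mpTr {n : ℕ} (A : Fin n → Fin n → WithBot ℝ) : WithBot ℝ :=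
  univ.sup fun i => A i i

/-- The Kleene star `A* = I ⊕ A ⊕ ⋯ ⊕ A^(n-1)`. -/
noncomputable def mpStar {n : ℕ} (A : Fin n → Fin n → WithBot ℝ) :
    Fin n → Fin n → WithBot ℝ :=
  fun i j => (range n).sup fun m => mpPow A m i j

/-- Conjugate transpose: entry `(i,j)` is `-a_{ji}` if `a_{ji} ≠ -∞`, else `-∞`. -/
noncomputable def mpConj {m n : ℕ} (A : Fin m → Fin n → WithBot ℝ) :
    Fin n → Fin m → WithBot ℝ :=
  fun i j => WithBot.map (fun a => -a) (A j i)

/-- Max-plus matrix-vector product. -/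
noncomputable def mpMulVec {n : ℕ} (A : Fin n → Fin n → WithBot ℝ)
    (x : Fin n → WithBot ℝ) : Fin n → WithBot ℝ :=
  fun i => univ.sup fun j => A i j + x j

/-!
`A^k i j` is the maximal weight of a walk of length `k` from `i` to `j`. Two of the first
`n + 1` vertices of a walk of length `k ≥ n` coincide, so it contains a closed subwalk of
length `d ∈ [1, n]`; its weight is at most `tr (A^d) ≤ 0`, so cutting it out gives a walk of
length `k - d` that is at least as heavy. Hence `A^k ≤ A^(k-d)`, and strong induction on `k`
brings every power down to one of `I, A, …, A^(n-1)`.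
-/

def walkWeight {ι M : Type*} [AddCommMonoid M] (A : ι → ι → M) (k : ℕ) (p : ℕ → ι) : M :=
  ∑ t ∈ range k, A (p t) (p (t + 1))

section Walk

variable {ι M : Type*} [AddCommMonoid M] (A : ι → ι → M)

theorem walkWeight_succ (k : ℕ) (p : ℕ → ι) :
    walkWeight A (k + 1) p = A (p 0) (p 1) + walkWeight A k (fun t => p (t + 1)) := by
  rw [walkWeight, sum_range_succ', add_comm]
  rfl

theorem walkWeight_add (a b : ℕ) (p : ℕ → ι) :
    walkWeight A (a + b) p = walkWeight A a p + walkWeight A b (fun t => p (a + t)) := by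
  simp only [walkWeight, sum_range_add, add_assoc]

theorem walkWeight_congr {k : ℕ} {p q : ℕ → ι} (h : ∀ t ≤ k, p t = q t) :
    walkWeight A k p = walkWeight A k q :=
  sum_congr rfl fun t ht => by
    rw [mem_range] at ht
    rw [h t ht.le, h (t + 1) ht]

theorem exists_walkWeight_le_of_cycle [PartialOrder M] [IsOrderedAddMonoid M] {s d : ℕ}
    (r : ℕ) {p : ℕ → ι} (hcyc : p s = p (s + d))
    (hle : walkWeight A d (fun t => p (s + t)) ≤ 0) :
    ∃ q : ℕ → ι, q 0 = p 0 ∧ q (s + r) = p (s + d + r) ∧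
      walkWeight A (s + d + r) p ≤ walkWeight A (s + r) q := by
  set q : ℕ → ι := fun t => if t ≤ s then p t else p (t + d) with hq
  have hhead : walkWeight A s q = walkWeight A s p :=
    walkWeight_congr A fun t ht => by simp only [hq, if_pos ht]
  have htail : (fun t => q (s + t)) = fun t => p (s + d + t) := by
    funext t
    rcases Nat.eq_zero_or_pos t with rfl | ht
    · simpa [hq] using hcyc
    · simp only [hq, if_neg (by omega : ¬ s + t ≤ s)]
      congr 1
      omega
  refine ⟨q, by simp [hq], congrFun htail r, ?_⟩
  rw [walkWeight_add, walkWeight_add, walkWeight_add A s r, hhead, htail]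
  calc walkWeight A s p + walkWeight A d (fun t => p (s + t)) +
        walkWeight A r (fun t => p (s + d + t))
      ≤ walkWeight A s p + 0 + walkWeight A r (fun t => p (s + d + t)) := by gcongr
    _ = _ := by rw [add_zero]

end Walk

theorem exists_map_eq_map_add_of_card {ι : Type*} [Fintype ι] (p : ℕ → ι) :
    ∃ s d, 0 < d ∧ s + d ≤ Fintype.card ι ∧ p s = p (s + d) := by
  obtain ⟨a, b, hab, hp⟩ :=
    Fintype.exists_ne_map_eq_of_card_lt (fun u : Fin (Fintype.card ι + 1) => p u) (by simp)
  rcases Nat.lt_or_gt_of_ne (Fin.val_ne_of_ne hab) with h | h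
  · exact ⟨a, b - a, by omega, by omega, by simpa [Nat.add_sub_cancel' h.le] using hp⟩
  · exact ⟨b, a - b, by omega, by omega, by simpa [Nat.add_sub_cancel' h.le] using hp.symm⟩

section MaxPlus

variable {n : ℕ} (A : Fin n → Fin n → WithBot ℝ)

theorem walkWeight_le_mpPow (k : ℕ) (p : ℕ → Fin n) :
    walkWeight A k p ≤ mpPow A k (p 0) (p k) := by
  induction k generalizing p with
  | zero => simp [walkWeight, mpPow, mpId]
  | succ k ih =>
    rw [walkWeight_succ]
    calc A (p 0) (p 1) + walkWeight A k (fun t => p (t + 1))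
        ≤ A (p 0) (p 1) + mpPow A k (p 1) (p (k + 1)) := by gcongr; exact ih _
      _ ≤ mpPow A (k + 1) (p 0) (p (k + 1)) :=
        le_sup (f := fun l => A (p 0) l + mpPow A k l (p (k + 1))) (mem_univ (p 1))

theorem exists_mpPow_le_walkWeight {k : ℕ} {i j : Fin n} (h : mpPow A k i j ≠ ⊥) :
    ∃ p : ℕ → Fin n, p 0 = i ∧ p k = j ∧ mpPow A k i j ≤ walkWeight A k p := by
  induction k generalizing i with
  | zero =>
    have hij : i = j := by by_contra hij; simp [mpPow, mpId, hij] at h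
    exact ⟨fun _ => i, rfl, hij, by simp [mpPow, mpId, walkWeight, hij]⟩
  | succ k ih =>
    obtain ⟨l, -, hl⟩ := exists_mem_eq_sup univ ⟨i, mem_univ i⟩
      (fun l => A i l + mpPow A k l j)
    have hl' : mpPow A (k + 1) i j = A i l + mpPow A k l j := hl
    obtain ⟨p, hp0, hpk, hle⟩ := ih (i := l) fun h' => h (by rw [hl', h', WithBot.add_bot])
    refine ⟨fun t => if t = 0 then i else p (t - 1), rfl, by simpa using hpk, ?_⟩
    rw [walkWeight_succ, hl']
    simpa [hp0] using add_le_add_right hle (A i l)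

theorem walkWeight_le_zero_of_closed
    (hTr : ∀ m : ℕ, 1 ≤ m → m ≤ n → mpTr (mpPow A m) ≤ ((0 : ℝ) : WithBot ℝ))
    {d : ℕ} (hd : 0 < d) (hdn : d ≤ n) {p : ℕ → Fin n} (hp : p d = p 0) :
    walkWeight A d p ≤ 0 :=
  calc walkWeight A d p ≤ mpPow A d (p 0) (p 0) := hp ▸ walkWeight_le_mpPow A d p
    _ ≤ mpTr (mpPow A d) := le_sup (f := fun v => mpPow A d v v) (mem_univ _)
    _ ≤ 0 := hTr d hd hdn

theorem exists_mpPow_le_mpPow_sub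
    (hTr : ∀ m : ℕ, 1 ≤ m → m ≤ n → mpTr (mpPow A m) ≤ ((0 : ℝ) : WithBot ℝ))
    {k : ℕ} (hk : n ≤ k) (i j : Fin n) :
    ∃ d, 0 < d ∧ d ≤ k ∧ mpPow A k i j ≤ mpPow A (k - d) i j := by
  by_cases hb : mpPow A k i j = ⊥
  · exact ⟨k, i.pos.trans_le hk, le_rfl, by simp [hb]⟩
  obtain ⟨p, hp0, hpk, hle⟩ := exists_mpPow_le_walkWeight A hb
  obtain ⟨s, d, hd, hsd, hcyc⟩ := exists_map_eq_map_add_of_card p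
  rw [Fintype.card_fin] at hsd
  obtain ⟨r, rfl⟩ : ∃ r, k = s + d + r := ⟨k - (s + d), by omega⟩
  have hcycle : walkWeight A d (fun t => p (s + t)) ≤ 0 :=
    walkWeight_le_zero_of_closed A hTr hd (by omega) (by simpa using hcyc.symm)
  obtain ⟨q, hq0, hqr, hpq⟩ := exists_walkWeight_le_of_cycle A r hcyc hcycle
  refine ⟨d, hd, by omega, ?_⟩
  calc mpPow A (s + d + r) i j ≤ walkWeight A (s + d + r) p := hle
    _ ≤ walkWeight A (s + r) q := hpq
    _ ≤ mpPow A (s + r) (q 0) (q (s + r)) := walkWeight_le_mpPow A _ q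
    _ = mpPow A (s + d + r - d) i j := by
      rw [hq0, hqr, hp0, hpk, show s + d + r - d = s + r by omega]

end MaxPlus

/-- If `Tr(A) ≤ 𝟙` (i.e. `tr(A^m) ≤ 0` for all `m = 1,…,n`), then for every
`k ≥ 0`, `A^k ≤ A*` entrywise, where `A* = I ⊕ A ⊕ ⋯ ⊕ A^(n-1)`. -/
theorem maxplus_pow_le_star (n : ℕ) (A : Fin n → Fin n → WithBot ℝ)
    (hTr : ∀ m : ℕ, 1 ≤ m → m ≤ n → mpTr (mpPow A m) ≤ ((0 : ℝ) : WithBot ℝ)) :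
    ∀ (k : ℕ) (i j : Fin n), mpPow A k i j ≤ mpStar A i j := by
  intro k
  induction k using Nat.strong_induction_on with
  | _ k ih =>
  intro i j
  rcases lt_or_ge k n with hk | hk
  · exact le_sup (f := fun m => mpPow A m i j) (mem_range.mpr hk)
  · obtain ⟨d, hd, hdk, hle⟩ := exists_mpPow_le_mpPow_sub A hTr hk i j
    exact hle.trans (ih (k - d) (by omega) i j)
end

section
/- Let A be an n×n matrix over the max-plus algebra with Tr(A) ≤ 𝟙. Then A⁺ = A A* ≤ A*, where A⁺ = A ⊕ A² ⊕ ⋯ ⊕ Aⁿ and A* = I ⊕ A ⊕ ⋯ ⊕ A^{n-1}. -/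
open Finset

/-!
The entry `(A^m)ᵢⱼ` is the maximal weight of a walk of length `m` from `i` to `j`. A walk of
length `n` visits `n + 1` vertices, so it returns to some vertex after `c ∈ [1, n]` steps; that
closed subwalk weighs at most `tr(A^c) ≤ 0`, and cutting it out leaves a walk of length `n - c < n`
that is at least as heavy. Hence `Aⁿ ≤ A*`, and `A A* = A⁺` is distributivity of `+` over `max`.
-/

lemma WithBot.add_finset_sup {M ι : Type*} [AddCommMonoid M] [LinearOrder M]
    [IsOrderedAddMonoid M] (a : WithBot M) (s : Finset ι) (f : ι → WithBot M) :
    a + s.sup f = s.sup fun k => a + f k :=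
  apply_sup_eq_sup_comp_of_linearOrder (a + ·) (fun _ _ h => add_le_add_right h a)
    (WithBot.add_bot a)

lemma Fintype.exists_pos_add_le_card_map_add_eq {α : Type*} [Fintype α] (p : ℕ → α) :
    ∃ a c, 0 < c ∧ a + c ≤ Fintype.card α ∧ p (a + c) = p a := by
  obtain ⟨x, hx, y, hy, hxy, hp⟩ := exists_ne_map_eq_of_card_lt_of_maps_to
    (s := range (Fintype.card α + 1)) (t := univ) (f := p) (by simp)
    (fun _ _ => mem_coe.2 (mem_univ _))
  rw [mem_range] at hx hy
  rcases hxy.lt_or_gt with h | h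
  · exact ⟨x, y - x, by omega, by omega, by rw [Nat.add_sub_cancel' h.le, hp]⟩
  · exact ⟨y, x - y, by omega, by omega, by rw [Nat.add_sub_cancel' h.le, hp]⟩

section MaxPlus

variable {n : ℕ} (A : Fin n → Fin n → WithBot ℝ)

lemma le_mpPow_one (i j : Fin n) : A i j ≤ mpPow A 1 i j := by
  change _ ≤ univ.sup fun k => A i k + mpId n k j
  exact (by simp [mpId] : A i j = A i j + mpId n j j).trans_le (le_sup (f := fun k => A i k + mpId n k j) (mem_univ j))

lemma mpPow_add_le (a b : ℕ) (i k j : Fin n) :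
    mpPow A a i k + mpPow A b k j ≤ mpPow A (a + b) i j := by
  induction a generalizing i with
  | zero => by_cases h : i = k <;> simp [mpPow, mpId, h]
  | succ a ih =>
    rw [Nat.add_right_comm]
    change (univ.sup fun l => A i l + mpPow A a l k) + _ ≤
      univ.sup fun l => A i l + mpPow A (a + b) l j
    rw [add_comm, WithBot.add_finset_sup]
    refine sup_mono_fun fun l _ => ?_
    calc mpPow A b k j + (A i l + mpPow A a l k)
        = A i l + (mpPow A a l k + mpPow A b k j) := by ac_rfl
      _ ≤ A i l + mpPow A (a + b) l j := add_le_add_right (ih l) _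

lemma sum_Ico_le_mpPow (p : ℕ → Fin n) (a d : ℕ) :
    ∑ k ∈ Ico a (a + d), A (p k) (p (k + 1)) ≤ mpPow A d (p a) (p (a + d)) := by
  induction d with
  | zero => simp [mpPow, mpId]
  | succ d ih =>
    rw [← add_assoc, sum_Ico_succ_top (by omega)]
    exact (add_le_add ih (le_mpPow_one A _ _)).trans (mpPow_add_le A d 1 _ _ _)

lemma exists_walk_of_mpPow_ne_bot (m : ℕ) (i j : Fin n) (h : mpPow A m i j ≠ ⊥) :
    ∃ p : ℕ → Fin n, p 0 = i ∧ p m = j ∧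
      mpPow A m i j = ∑ k ∈ range m, A (p k) (p (k + 1)) := by
  induction m generalizing i with
  | zero =>
    have hij : i = j := by by_contra hij; simp [mpPow, mpId, hij] at h
    exact ⟨fun _ => i, rfl, hij, by simp [mpPow, mpId, hij]⟩
  | succ m ih =>
    obtain ⟨k, -, hk⟩ := exists_mem_eq_sup univ ⟨i, mem_univ i⟩
      fun k => A i k + mpPow A m k j
    change mpPow A (m + 1) i j = A i k + mpPow A m k j at hk
    rw [hk, WithBot.add_ne_bot] at h
    obtain ⟨p, hp0, hpm, hp⟩ := ih k h.2
    refine ⟨fun t => match t with | 0 => i | t + 1 => p t, rfl, hpm, ?_⟩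
    rw [sum_range_succ', hk, ← hp, add_comm]
    exact congrArg _ (congrArg (A i) hp0.symm)

lemma mpPow_le_mpStar (hTr : ∀ m : ℕ, 1 ≤ m → m ≤ n → mpTr (mpPow A m) ≤ ((0 : ℝ) : WithBot ℝ))
    (i j : Fin n) : mpPow A n i j ≤ mpStar A i j := by
  by_cases hbot : mpPow A n i j = ⊥
  · simp [hbot]
  obtain ⟨p, hp0, hpn, hweight⟩ := exists_walk_of_mpPow_ne_bot A n i j hbot
  obtain ⟨a, c, hc, hacn, hcycle⟩ := Fintype.exists_pos_add_le_card_map_add_eq p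
  rw [Fintype.card_fin] at hacn
  obtain ⟨e, he⟩ := Nat.exists_eq_add_of_le hacn
  have hcycle_le : mpPow A c (p a) (p a) ≤ 0 :=
    (le_sup (f := fun x => mpPow A c x x) (mem_univ _)).trans (hTr c hc (by omega))
  calc mpPow A n i j
      = (∑ k ∈ Ico 0 (0 + a), A (p k) (p (k + 1))) + (∑ k ∈ Ico a (a + c), A (p k) (p (k + 1)))
        + ∑ k ∈ Ico (a + c) (a + c + e), A (p k) (p (k + 1)) := by
        rw [hweight, zero_add, sum_Ico_consecutive _ (by omega) (by omega),
          sum_Ico_consecutive _ (by omega) (by omega), range_eq_Ico, he]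
    _ ≤ mpPow A a (p 0) (p (0 + a)) + mpPow A c (p a) (p (a + c))
        + mpPow A e (p (a + c)) (p (a + c + e)) := by
        gcongr <;> apply sum_Ico_le_mpPow
    _ ≤ mpPow A a i (p a) + 0 + mpPow A e (p a) j := by
        rw [hp0, zero_add, hcycle, ← he, hpn]
        gcongr
    _ ≤ mpPow A (a + e) i j := by rw [add_zero]; exact mpPow_add_le A a e _ _ _
    _ ≤ mpStar A i j := le_sup (f := fun m => mpPow A m i j) (mem_range.2 (by omega))

lemma mpMul_mpStar_apply (i j : Fin n) :
    mpMul A (mpStar A) i j = (Icc 1 n).sup fun m => mpPow A m i j := by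
  rw [← Ico_add_one_right_eq_Icc, ← zero_add 1, ← image_add_right_Ico, ← range_eq_Ico,
    sup_image]
  simp only [mpMul, mpStar, WithBot.add_finset_sup]
  exact Finset.sup_comm _ _ _

end MaxPlus

/-- If `Tr(A) ≤ 𝟙`, then `A⁺ = A A* ≤ A*`, where `A⁺ = A ⊕ ⋯ ⊕ Aⁿ` and
`A* = I ⊕ A ⊕ ⋯ ⊕ A^(n-1)`. -/
theorem maxplus_plus_le_star (n : ℕ) (A : Fin n → Fin n → WithBot ℝ)
    (hTr : ∀ m : ℕ, 1 ≤ m → m ≤ n → mpTr (mpPow A m) ≤ ((0 : ℝ) : WithBot ℝ)) :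
    (∀ i j : Fin n,
      mpMul A (mpStar A) i j = (Icc 1 n).sup fun m => mpPow A m i j) ∧
    (∀ i j : Fin n,
      ((Icc 1 n).sup fun m => mpPow A m i j) ≤ mpStar A i j) := by
  refine ⟨mpMul_mpStar_apply A, fun i j => Finset.sup_le fun m hm => ?_⟩
  rcases (mem_Icc.1 hm).2.lt_or_eq with h | rfl
  · exact le_sup (f := fun m => mpPow A m i j) (mem_range.2 h)
  · exact mpPow_le_mpStar A hTr i j
end

section
/- Let A be an n×n matrix over the max-plus algebra and suppose x ∈ ℝⁿ is a regular vector with A x ≤ x. Then Tr(A) ≤ 𝟙, i.e., tr(A^m) ≤ 0 for all m = 1,…,n. -/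
open Finset

/-! `A x ≤ x` is preserved under max-plus products, so `A^m x ≤ x` for every `m`. Reading
off the `i`-th diagonal term gives `(A^m)ᵢᵢ + xᵢ ≤ xᵢ`, and since `xᵢ` is finite it can be
cancelled, leaving `(A^m)ᵢᵢ ≤ 0`. -/

section MaxPlus

variable {n : ℕ}

lemma le_mpMulVec (A : Fin n → Fin n → WithBot ℝ) (x : Fin n → WithBot ℝ) (i j : Fin n) :
    A i j + x j ≤ mpMulVec A x i :=
  le_sup (f := fun j => A i j + x j) (mem_univ j)

lemma mpMulVec_mono (A : Fin n → Fin n → WithBot ℝ) {x y : Fin n → WithBot ℝ} (hxy : x ≤ y) :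
    mpMulVec A x ≤ mpMulVec A y := fun i =>
  sup_mono_fun fun j _ => add_le_add_right (hxy j) (A i j)

lemma mpMulVec_mpId_le (x : Fin n → WithBot ℝ) : mpMulVec (mpId n) x ≤ x := by
  intro i
  refine Finset.sup_le fun j _ => ?_
  by_cases hij : i = j
  · subst hij
    simp [mpId]
  · simp [mpId, hij]

lemma mpMulVec_mpMul_le (A B : Fin n → Fin n → WithBot ℝ) (x : Fin n → WithBot ℝ) :
    mpMulVec (mpMul A B) x ≤ mpMulVec A (mpMulVec B x) := by
  intro i
  refine Finset.sup_le fun j _ => ?_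
  obtain ⟨k, -, hk⟩ := exists_mem_eq_sup univ ⟨j, mem_univ j⟩ fun k => A i k + B k j
  calc mpMul A B i j + x j = A i k + (B k j + x j) := by rw [mpMul, hk, add_assoc]
    _ ≤ A i k + mpMulVec B x k := add_le_add_right (le_mpMulVec B x k j) _
    _ ≤ mpMulVec A (mpMulVec B x) i := le_mpMulVec A _ i k

lemma mpMulVec_mpPow_le_of_mpMulVec_le {A : Fin n → Fin n → WithBot ℝ} {x : Fin n → WithBot ℝ}
    (hx : mpMulVec A x ≤ x) (m : ℕ) : mpMulVec (mpPow A m) x ≤ x := by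
  induction m with
  | zero => exact mpMulVec_mpId_le x
  | succ m ih =>
    calc mpMulVec (mpMul A (mpPow A m)) x ≤ mpMulVec A (mpMulVec (mpPow A m) x) :=
          mpMulVec_mpMul_le _ _ x
      _ ≤ mpMulVec A x := mpMulVec_mono A ih
      _ ≤ x := hx

lemma mpTr_le_zero_of_mpMulVec_le {A : Fin n → Fin n → WithBot ℝ} {x : Fin n → ℝ}
    (hx : mpMulVec A (fun j => (x j : WithBot ℝ)) ≤ fun j => (x j : WithBot ℝ)) :
    mpTr A ≤ ((0 : ℝ) : WithBot ℝ) := by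
  refine Finset.sup_le fun i _ => ?_
  have hdiag : A i i + (x i : WithBot ℝ) ≤ ((0 : ℝ) : WithBot ℝ) + (x i : WithBot ℝ) := by
    rw [← WithBot.coe_add, zero_add]
    exact (le_mpMulVec A _ i i).trans (hx i)
  exact (WithBot.add_le_add_iff_right WithBot.coe_ne_bot).mp hdiag

end MaxPlus

/-- If a regular vector `x ∈ ℝⁿ` satisfies `A x ≤ x`, then `Tr(A) ≤ 𝟙`,
i.e. `tr(A^m) ≤ 0` for all `m = 1,…,n`. -/
theorem maxplus_Ax_le_x_Tr (n : ℕ) (A : Fin n → Fin n → WithBot ℝ)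
    (x : Fin n → ℝ)
    (hx : ∀ i : Fin n,
      mpMulVec A (fun j => ((x j : ℝ) : WithBot ℝ)) i ≤ ((x i : ℝ) : WithBot ℝ)) :
    ∀ m : ℕ, 1 ≤ m → m ≤ n → mpTr (mpPow A m) ≤ ((0 : ℝ) : WithBot ℝ) := fun m _ _ =>
  mpTr_le_zero_of_mpMulVec_le (mpMulVec_mpPow_le_of_mpMulVec_le hx m)
end

section
/- Let A be an n×n matrix over the max-plus algebra with finite spectral radius λ (λ = max_{1≤m≤n} tr(A^m)/m). Then for every regular vector x ∈ ℝⁿ, x⁻ A x ≥ λ, i.e., max_{i,j} (a_{ij} + x_j − x_i) ≥ λ. -/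
open Finset

/-- The max-plus spectral radius `λ = max_{1≤m≤n} tr(A^m)/m`. -/
noncomputable def mpLam {n : ℕ} (A : Fin n → Fin n → WithBot ℝ) : WithBot ℝ :=
  (Icc 1 n).sup fun m => WithBot.map (fun a => a / (m : ℝ)) (mpTr (mpPow A m))

/-!
If `-x i + a_{ij} + x j ≤ c` for every arc, the terms `x k` telescope along any walk, so every
walk of length `m` from `i` to `j` has weight at most `x i + m • c - x j`. For closed walks this
gives `tr(A^m) ≤ m • c`, hence `tr(A^m)/m ≤ c` for `m ≥ 1` and `λ ≤ c`; now take `c = x⁻ A x`.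
-/

lemma WithBot.coe_neg_add_coe (a : ℝ) : ((-a : ℝ) : WithBot ℝ) + (a : WithBot ℝ) = 0 := by
  rw [← WithBot.coe_add, neg_add_cancel, WithBot.coe_zero]

lemma WithBot.map_div_le_of_le_nsmul {t c : WithBot ℝ} {m : ℕ} (hm : 0 < m) (h : t ≤ m • c) :
    t.map (· / (m : ℝ)) ≤ c := by
  induction t with
  | bot => exact bot_le
  | coe t =>
    induction c with
    | bot =>
      obtain ⟨k, rfl⟩ := Nat.exists_eq_add_of_lt hm
      simp [succ_nsmul] at h
    | coe c =>
      rw [← WithBot.coe_nsmul, WithBot.coe_le_coe, nsmul_eq_mul] at h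
      rw [WithBot.map_coe, WithBot.coe_le_coe, div_le_iff₀ (by positivity)]
      linarith

section

variable {n : ℕ} {A : Fin n → Fin n → WithBot ℝ} {x : Fin n → ℝ} {c : WithBot ℝ}

lemma neg_add_mpPow_add_le_nsmul
    (hA : ∀ i j, ((-x i : ℝ) : WithBot ℝ) + A i j + (x j : WithBot ℝ) ≤ c)
    (m : ℕ) (i j : Fin n) :
    ((-x i : ℝ) : WithBot ℝ) + mpPow A m i j + (x j : WithBot ℝ) ≤ m • c := by
  induction m generalizing i with
  | zero =>
    by_cases hij : i = j
    · subst hij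
      simp [mpPow, mpId, WithBot.coe_neg_add_coe]
    · simp [mpPow, mpId, hij]
  | succ m ih =>
    have hsup : ((-x i : ℝ) : WithBot ℝ) + mpPow A (m + 1) i j + (x j : WithBot ℝ) =
        univ.sup fun k => ((-x i : ℝ) : WithBot ℝ) + (A i k + mpPow A m k j) + (x j : WithBot ℝ) :=
      Finset.apply_sup_eq_sup_comp_of_linearOrder (s := univ) (f := fun k => A i k + mpPow A m k j)
        (fun a => ((-x i : ℝ) : WithBot ℝ) + a + x j) (fun a b hab => by dsimp only; gcongr)
        (by simp)
    rw [hsup, succ_nsmul']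
    refine Finset.sup_le fun k _ => ?_
    calc ((-x i : ℝ) : WithBot ℝ) + (A i k + mpPow A m k j) + (x j : WithBot ℝ)
        = ((-x i : ℝ) : WithBot ℝ) + (A i k + mpPow A m k j) + (x j : WithBot ℝ) + 0 :=
          (add_zero _).symm
      _ = (((-x i : ℝ) : WithBot ℝ) + A i k + x k) +
            (((-x k : ℝ) : WithBot ℝ) + mpPow A m k j + x j) := by
          rw [← WithBot.coe_neg_add_coe (x k)]
          ac_rfl
      _ ≤ c + m • c := add_le_add (hA i k) (ih k)

lemma mpTr_mpPow_le_nsmul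
    (hA : ∀ i j, ((-x i : ℝ) : WithBot ℝ) + A i j + (x j : WithBot ℝ) ≤ c) (m : ℕ) :
    mpTr (mpPow A m) ≤ m • c :=
  Finset.sup_le fun i _ => by
    simpa [add_right_comm _ (mpPow A m i i), WithBot.coe_neg_add_coe]
      using neg_add_mpPow_add_le_nsmul hA m i i

lemma mpLam_le_of_forall_neg_add_add_le
    (hA : ∀ i j, ((-x i : ℝ) : WithBot ℝ) + A i j + (x j : WithBot ℝ) ≤ c) :
    mpLam A ≤ c :=
  Finset.sup_le fun m hm =>
    WithBot.map_div_le_of_le_nsmul (Finset.mem_Icc.mp hm).1 (mpTr_mpPow_le_nsmul hA m)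

end

/-- If the spectral radius `λ` of `A` is finite, then for every regular vector
`x ∈ ℝⁿ`, `x⁻ A x ≥ λ`, i.e. `max_{i,j} (a_{ij} + x_j − x_i) ≥ λ`. -/
theorem maxplus_xAx_ge_lam (n : ℕ) (A : Fin n → Fin n → WithBot ℝ) (l : ℝ)
    (hl : mpLam A = (l : WithBot ℝ)) (x : Fin n → ℝ) :
    ((l : ℝ) : WithBot ℝ) ≤
      univ.sup fun i => univ.sup fun j =>
        ((-x i : ℝ) : WithBot ℝ) + A i j + ((x j : ℝ) : WithBot ℝ) := by
  rw [← hl]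
  exact mpLam_le_of_forall_neg_add_add_le fun i j =>
    le_sup_of_le (mem_univ i) (le_sup_of_le (mem_univ j) le_rfl)
end
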